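/- No labeled node receives net in-flow at the optimum: if x* minimizes F(x) = (1/2) Σ_e d_e (x_e² + λ|x_e|) subject to A_u x = b_s, then every entry of w = A_l x* is nonnegative. (Proof idea: a labeled node with negative out-flow admits a positive flow-path from another labeled node into it, which can be subtracted to strictly reduce the objective.) -/

import Mathlib

/-!
Suppose a labeled node `i` has negative divergence `(A x*)ᵢ < 0`. The set `S` of nodes from which
`i` can be reached along edges carried in their flow direction is closed under taking
predecessors, so no flow enters `S`, and its total divergence is nonnegative. Hence some node
`j ∈ S` has positive divergence; unlabeled nodes have divergence `0` or `-1`, so `j` is labeled.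
Subtracting a small multiple of the unit `j → i` path flow, which agrees in sign with `x*` on
every edge it uses, keeps `A_u x = b_s` and strictly decreases every edge cost it touches.
-/

open Matrix Filter Topology

lemma Matrix.submatrix_id_mulVec_apply {l m n R : Type*} [Fintype n]
    [NonUnitalNonAssocSemiring R] (M : Matrix m n R) (f : l → m) (x : n → R) (i : l) :
    (M.submatrix f id *ᵥ x) i = (M *ᵥ x) (f i) :=
  rfl

section IncidenceMatrix

variable {V E : Type*} [DecidableEq V] (R : Type*) [CommRing R] (ends : E → V × V)

def incidenceMatrix : Matrix V E R :=
  Matrix.of fun v e => if v = (ends e).1 then 1 else if v = (ends e).2 then -1 else 0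

variable {R ends}

lemma incidenceMatrix_col_of_ne {e : E} (he : (ends e).1 ≠ (ends e).2) :
    (incidenceMatrix R ends).col e = Pi.single (ends e).1 1 - Pi.single (ends e).2 1 := by
  ext v
  by_cases h₁ : v = (ends e).1
  · subst h₁
    simp [incidenceMatrix, he]
  · by_cases h₂ : v = (ends e).2
    · subst h₂
      simp [incidenceMatrix, he.symm]
    · simp [incidenceMatrix, h₁, h₂]

variable [Fintype E]

lemma sum_incidenceMatrix_mulVec (hsimple : ∀ e, (ends e).1 ≠ (ends e).2) (S : Finset V)
    (x : E → R) :
    ∑ v ∈ S, (incidenceMatrix R ends *ᵥ x) v =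
      ∑ e, ((if (ends e).1 ∈ S then 1 else 0) - (if (ends e).2 ∈ S then 1 else 0)) * x e := by
  simp only [mulVec, dotProduct]
  rw [Finset.sum_comm]
  refine Finset.sum_congr rfl fun e _ => ?_
  have hcol := Finset.sum_congr rfl fun v (_ : v ∈ S) =>
    congrFun (incidenceMatrix_col_of_ne (R := R) (hsimple e)) v
  simp only [col_apply, Pi.sub_apply, Finset.sum_sub_distrib, Finset.sum_pi_single'] at hcol
  rw [← Finset.sum_mul]
  exact congrArg (· * x e) hcol

variable [DecidableEq E]

lemma incidenceMatrix_mulVec_single (hsimple : ∀ e, (ends e).1 ≠ (ends e).2) (e : E) (t : R) :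
    incidenceMatrix R ends *ᵥ Pi.single e t =
      t • (Pi.single (ends e).1 1 - Pi.single (ends e).2 1) := by
  ext v
  simp [mulVec_single, incidenceMatrix_col_of_ne (hsimple e), mul_comm]

end IncidenceMatrix

section Conformal

variable {E : Type*} {c c' x : E → ℝ}

def IsConformal (c x : E → ℝ) : Prop := ∀ e, c e = 0 ∨ 0 < c e * x e

lemma IsConformal.add (hc : IsConformal c x) (hc' : IsConformal c' x) :
    IsConformal (c + c') x := by
  intro e
  rcases hc e with h | h <;> rcases hc' e with h' | h'
  · exact Or.inl (by simp [h, h'])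
  · exact Or.inr (by simpa [h, add_mul] using h')
  · exact Or.inr (by simpa [h', add_mul] using h)
  · exact Or.inr (by simp only [Pi.add_apply, add_mul]; linarith)

lemma isConformal_single [DecidableEq E] {e : E} {t : ℝ} (h : 0 < t * x e) :
    IsConformal (Pi.single e t) x := by
  intro e'
  by_cases he : e' = e
  · subst he
    simp [h]
  · simp [he]

lemma abs_sub_lt_abs_of_sq_lt {x δ : ℝ} (h : δ ^ 2 < 2 * (δ * x)) : |x - δ| < |x| :=
  sq_lt_sq.mp (by nlinarith)

lemma sq_add_mul_abs_lt_of_abs_lt {x y lam : ℝ} (hlam : 0 ≤ lam) (h : |y| < |x|) :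
    y ^ 2 + lam * |y| < x ^ 2 + lam * |x| := by
  nlinarith [sq_lt_sq.mpr h, mul_le_mul_of_nonneg_left h.le hlam]

variable [Fintype E]

lemma exists_pos_sum_cost_sub_lt {d : E → ℝ} {lam : ℝ} (hd : ∀ e, 0 < d e) (hlam : 0 ≤ lam)
    (hc : IsConformal c x) (hc0 : c ≠ 0) :
    ∃ ε > 0, ∑ e, d e * ((x e - ε * c e) ^ 2 + lam * |x e - ε * c e|) <
      ∑ e, d e * (x e ^ 2 + lam * |x e|) := by
  have hsmall : ∀ᶠ ε in 𝓝 (0 : ℝ), ∀ e, c e = 0 ∨ ε * c e ^ 2 < 2 * (c e * x e) := by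
    refine eventually_all.mpr fun e => ?_
    rcases hc e with h | h
    · exact Eventually.of_forall fun _ => Or.inl h
    · have hlim : Tendsto (fun ε : ℝ => ε * c e ^ 2) (𝓝 0) (𝓝 0) :=
        (continuous_mul_const (c e ^ 2)).tendsto' 0 0 (zero_mul _)
      exact (hlim.eventually_lt_const (by linarith)).mono fun _ => Or.inr
  obtain ⟨ε, hε, hεc⟩ := hsmall.exists_gt
  have hedge : ∀ e, c e ≠ 0 → |x e - ε * c e| < |x e| := fun e he =>
    abs_sub_lt_abs_of_sq_lt <| calc
      (ε * c e) ^ 2 = ε * (ε * c e ^ 2) := by ring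
      _ < ε * (2 * (c e * x e)) := mul_lt_mul_of_pos_left ((hεc e).resolve_left he) hε
      _ = 2 * (ε * c e * x e) := by ring
  have hcost : ∀ e, c e ≠ 0 → d e * ((x e - ε * c e) ^ 2 + lam * |x e - ε * c e|) <
      d e * (x e ^ 2 + lam * |x e|) := fun e he =>
    mul_lt_mul_of_pos_left (sq_add_mul_abs_lt_of_abs_lt hlam (hedge e he)) (hd e)
  obtain ⟨e₀, he₀⟩ := Function.ne_iff.mp hc0
  refine ⟨ε, hε, Finset.sum_lt_sum (fun e _ => ?_) ⟨e₀, Finset.mem_univ _, hcost e₀ he₀⟩⟩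
  by_cases he : c e = 0
  · simp [he]
  · exact (hcost e he).le

end Conformal

section Flow

variable {V E : Type*} [DecidableEq V] [Fintype E] {ends : E → V × V}
  {x : E → ℝ}

variable (ends) in
def FlowStep (x : E → ℝ) (u v : V) : Prop :=
  ∃ e, (ends e = (u, v) ∧ 0 < x e) ∨ (ends e = (v, u) ∧ x e < 0)

lemma FlowStep.exists_single [DecidableEq E] (hsimple : ∀ e, (ends e).1 ≠ (ends e).2) {u v : V}
    (h : FlowStep ends x u v) :
    ∃ e t, 0 < t * x e ∧
      incidenceMatrix ℝ ends *ᵥ Pi.single e t = Pi.single u 1 - Pi.single v 1 := by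
  obtain ⟨e, ⟨he, hx⟩ | ⟨he, hx⟩⟩ := h
  · exact ⟨e, 1, by simpa using hx, by simp [incidenceMatrix_mulVec_single hsimple, he]⟩
  · exact ⟨e, -1, by simpa using hx, by simp [incidenceMatrix_mulVec_single hsimple, he]⟩

lemma exists_conformal_path_flow [DecidableEq E] (hsimple : ∀ e, (ends e).1 ≠ (ends e).2)
    {a b : V} (h : Relation.ReflTransGen (FlowStep ends x) a b) :
    ∃ c, IsConformal c x ∧ incidenceMatrix ℝ ends *ᵥ c = Pi.single a 1 - Pi.single b 1 := by
  induction h with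
  | refl => exact ⟨0, fun _ => Or.inl rfl, by simp⟩
  | tail _ hstep ih =>
    obtain ⟨c, hc, hAc⟩ := ih
    obtain ⟨e, t, ht, hAe⟩ := hstep.exists_single hsimple
    exact ⟨c + Pi.single e t, hc.add (isConformal_single ht), by rw [mulVec_add, hAc, hAe]; abel⟩

lemma sum_incidenceMatrix_mulVec_nonneg (hsimple : ∀ e, (ends e).1 ≠ (ends e).2) {S : Finset V}
    (hS : ∀ u v, FlowStep ends x u v → v ∈ S → u ∈ S) :
    0 ≤ ∑ v ∈ S, (incidenceMatrix ℝ ends *ᵥ x) v := by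
  rw [sum_incidenceMatrix_mulVec hsimple]
  refine Finset.sum_nonneg fun e _ => ?_
  rcases lt_trichotomy (x e) 0 with hx | hx | hx
  · have hin : (ends e).1 ∈ S → (ends e).2 ∈ S := hS _ _ ⟨e, Or.inr ⟨rfl, hx⟩⟩
    exact mul_nonneg_of_nonpos_of_nonpos (by split_ifs <;> simp_all) hx.le
  · simp [hx]
  · have hin : (ends e).2 ∈ S → (ends e).1 ∈ S := hS _ _ ⟨e, Or.inl ⟨rfl, hx⟩⟩
    exact mul_nonneg (by split_ifs <;> simp_all) hx.le

lemma exists_flowStep_reach_pos_of_neg [Fintype V] (hsimple : ∀ e, (ends e).1 ≠ (ends e).2)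
    {i : V} (hi : (incidenceMatrix ℝ ends *ᵥ x) i < 0) :
    ∃ j, Relation.ReflTransGen (FlowStep ends x) j i ∧ 0 < (incidenceMatrix ℝ ends *ᵥ x) j := by
  classical
  by_contra! hle
  set S := Finset.univ.filter fun u => Relation.ReflTransGen (FlowStep ends x) u i
  have hclosed : ∀ u v, FlowStep ends x u v → v ∈ S → u ∈ S := by
    intro u v huv hv
    simp only [S, Finset.mem_filter, Finset.mem_univ, true_and] at hv ⊢
    exact hv.head huv
  have hneg : ∑ v ∈ S, (incidenceMatrix ℝ ends *ᵥ x) v < ∑ v ∈ S, 0 :=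
    Finset.sum_lt_sum (fun v hv => hle v (Finset.mem_filter.mp hv).2)
      ⟨i, Finset.mem_filter.mpr ⟨Finset.mem_univ _, .refl⟩, hi⟩
  rw [Finset.sum_const_zero] at hneg
  exact (sum_incidenceMatrix_mulVec_nonneg hsimple hclosed).not_gt hneg

end Flow

theorem stmt_13_general (nl nu m : ℕ)
    (ends : Fin m → (Fin nl ⊕ Fin nu) × (Fin nl ⊕ Fin nu))
    (hsimple : ∀ e, (ends e).1 ≠ (ends e).2)
    (A : Matrix (Fin nl ⊕ Fin nu) (Fin m) ℝ)
    (hA : ∀ i e, A i e =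
      if i = (ends e).1 then 1 else if i = (ends e).2 then -1 else 0)
    (d : Fin m → ℝ) (hd : ∀ e, 0 < d e)
    (lam : ℝ) (hlam : 0 ≤ lam)
    (F : (Fin m → ℝ) → ℝ)
    (hF : F = fun x => (1 / 2) * ∑ e, d e * ((x e) ^ 2 + lam * |x e|))
    (s : Fin nu) (b : Fin nu → ℝ)
    (hb : b = fun j => if j = s then (-1 : ℝ) else 0)
    (xstar : Fin m → ℝ)
    (hfeas : A.submatrix Sum.inr id *ᵥ xstar = b)
    (hopt : ∀ z, A.submatrix Sum.inr id *ᵥ z = b → F xstar ≤ F z) :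
    ∀ i : Fin nl, 0 ≤ (A.submatrix Sum.inl id *ᵥ xstar) i := by
  intro i
  by_contra! hneg
  obtain rfl : A = incidenceMatrix ℝ ends := Matrix.ext hA
  obtain ⟨j, hji, hj⟩ := exists_flowStep_reach_pos_of_neg hsimple (i := Sum.inl i) hneg
  have hunlabeled : ∀ k, (incidenceMatrix ℝ ends *ᵥ xstar) (Sum.inr k) ≤ 0 := fun k => by
    rw [← submatrix_id_mulVec_apply, hfeas, hb]
    by_cases hk : k = s <;> simp [hk]
  obtain ⟨j, rfl⟩ : ∃ j', j = Sum.inl j' := by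
    cases j with
    | inl j => exact ⟨j, rfl⟩
    | inr k => exact absurd hj (hunlabeled k).not_gt
  have hji' : j ≠ i := by
    rintro rfl
    exact hj.not_gt hneg
  obtain ⟨c, hc, hAc⟩ := exists_conformal_path_flow hsimple hji
  have hc0 : c ≠ 0 := by
    rintro rfl
    simpa [hji'] using congrFun hAc (Sum.inl j)
  obtain ⟨ε, hε, hlt⟩ := exists_pos_sum_cost_sub_lt hd hlam hc hc0
  have hfeas' : (incidenceMatrix ℝ ends).submatrix Sum.inr id *ᵥ (xstar - ε • c) = b := by
    rw [← hfeas]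
    ext k
    simp [submatrix_id_mulVec_apply, mulVec_sub, mulVec_smul, hAc]
  have hFle := hopt _ hfeas'
  simp only [hF, Pi.sub_apply, Pi.smul_apply, smul_eq_mul] at hFle
  linarith

/-- No labeled node receives net in-flow at the optimum: every
entry of `w = A_l x*` is nonnegative, where `x*` minimizes
`F(x) = (1/2) Σₑ dₑ (xₑ² + λ|xₑ|)` subject to `A_u x = b_s`. -/
theorem stmt_13 (nl nu m : ℕ)
    (ends : Fin m → (Fin nl ⊕ Fin nu) × (Fin nl ⊕ Fin nu))
    (hsimple : ∀ e, (ends e).1 ≠ (ends e).2)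
    (hconn : ∀ i j : Fin nl ⊕ Fin nu,
      Relation.ReflTransGen (fun u v => ∃ e, ends e = (u, v) ∨ ends e = (v, u)) i j)
    (A : Matrix (Fin nl ⊕ Fin nu) (Fin m) ℝ)
    (hA : ∀ i e, A i e =
      if i = (ends e).1 then 1 else if i = (ends e).2 then -1 else 0)
    (d : Fin m → ℝ) (hd : ∀ e, 0 < d e)
    (lam : ℝ) (hlam : 0 ≤ lam)
    (F : (Fin m → ℝ) → ℝ)
    (hF : F = fun x => (1 / 2) * ∑ e, d e * ((x e) ^ 2 + lam * |x e|))
    (s : Fin nu) (b : Fin nu → ℝ)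
    (hb : b = fun j => if j = s then (-1 : ℝ) else 0)
    (xstar : Fin m → ℝ)
    (hfeas : A.submatrix Sum.inr id *ᵥ xstar = b)
    (hopt : ∀ z, A.submatrix Sum.inr id *ᵥ z = b → F xstar ≤ F z) :
    ∀ i : Fin nl, 0 ≤ (A.submatrix Sum.inl id *ᵥ xstar) i :=
  stmt_13_general nl nu m ends hsimple A hA d hd lam hlam F hF s b hb xstar hfeas hopt
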